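/- Let T > 0 and let w₁, w₂ : ℝ → ℝ be continuous. Then ∫₀ᵀ I₁[w₁](t) · I₁[w₂](t) dt = ∫₀ᵀ I₂[w₁](t) · w₂(t) dt. -/

import Mathlib

/-- The time integral operator I₁ from the paper. -/
noncomputable def I1 (T : ℝ) (w : ℝ → ℝ) (t : ℝ) : ℝ :=
  (∫ s in (0 : ℝ)..t, w s) - (1 / T) * ∫ s in (0 : ℝ)..T, (T - s) * w s

/-- The time integral operator I₂ from the paper. -/
noncomputable def I2 (T : ℝ) (w : ℝ → ℝ) (t : ℝ) : ℝ :=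
  (-∫ s in (0 : ℝ)..t, (t - s) * w s) + (t / T) * ∫ s in (0 : ℝ)..T, (T - s) * w s

/-! Since `I₂[w₁]' = -I₁[w₁]` and `I₁[w₂]' = w₂`, integrating `I₂[w₁] * w₂` by parts over `[0, T]`
gives `∫ I₁[w₁] I₁[w₂]` plus the boundary term `I₂[w₁] I₁[w₂] |₀ᵀ`, which vanishes because
`I₂[w₁](0) = I₂[w₁](T) = 0`. -/

open intervalIntegral

variable {w : ℝ → ℝ}

lemma integral_sub_mul_eq (hw : Continuous w) (t : ℝ) :
    ∫ s in (0 : ℝ)..t, (t - s) * w s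
      = t * (∫ s in (0 : ℝ)..t, w s) - ∫ s in (0 : ℝ)..t, s * w s := by
  simp_rw [sub_mul]
  have hconst : Continuous fun s => t * w s := continuous_const.mul hw
  have hmoment : Continuous fun s => s * w s := continuous_id.mul hw
  rw [integral_sub (hconst.intervalIntegrable _ _) (hmoment.intervalIntegrable _ _),
    integral_const_mul]

lemma hasDerivAt_integral_sub_mul (hw : Continuous w) (t : ℝ) :
    HasDerivAt (fun t => ∫ s in (0 : ℝ)..t, (t - s) * w s) (∫ s in (0 : ℝ)..t, w s) t := by
  have hprod : HasDerivAt (fun t => t * ∫ s in (0 : ℝ)..t, w s)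
      (1 * (∫ s in (0 : ℝ)..t, w s) + t * w t) t :=
    (hasDerivAt_id t).mul (hw.integral_hasStrictDerivAt 0 t).hasDerivAt
  have hmoment : HasDerivAt (fun t => ∫ s in (0 : ℝ)..t, s * w s) (t * w t) t :=
    ((continuous_id.mul hw).integral_hasStrictDerivAt 0 t).hasDerivAt
  rw [funext (integral_sub_mul_eq hw)]
  exact (hprod.fun_sub hmoment).congr_deriv (by ring)

lemma I1_hasDerivAt (T : ℝ) (hw : Continuous w) (t : ℝ) : HasDerivAt (I1 T w) (w t) t :=
  (hw.integral_hasStrictDerivAt 0 t).hasDerivAt.sub_const _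

lemma I2_hasDerivAt (T : ℝ) (hw : Continuous w) (t : ℝ) : HasDerivAt (I2 T w) (-I1 T w t) t := by
  have hlin : HasDerivAt (fun t => t / T * ∫ s in (0 : ℝ)..T, (T - s) * w s)
      (1 / T * ∫ s in (0 : ℝ)..T, (T - s) * w s) t :=
    ((hasDerivAt_id t).div_const T).mul_const _
  exact ((hasDerivAt_integral_sub_mul hw t).neg.add hlin).congr_deriv (by rw [I1]; ring)

lemma continuous_I1 (T : ℝ) (hw : Continuous w) : Continuous (I1 T w) :=
  continuous_iff_continuousAt.2 fun t => (I1_hasDerivAt T hw t).continuousAt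

@[simp]
lemma I2_zero (T : ℝ) (w : ℝ → ℝ) : I2 T w 0 = 0 := by
  simp [I2]

-- Also for `T = 0`, where `t / T` takes the junk value `0`.
@[simp]
lemma I2_self (T : ℝ) (w : ℝ → ℝ) : I2 T w T = 0 := by
  rcases eq_or_ne T 0 with rfl | hT
  · simp [I2]
  · simp [I2, div_self hT]

theorem time_integral_operators_adjoint_identity_general (T : ℝ)
    (w₁ w₂ : ℝ → ℝ) (hw₁ : Continuous w₁) (hw₂ : Continuous w₂) :
    (∫ t in (0 : ℝ)..T, I1 T w₁ t * I1 T w₂ t)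
      = ∫ t in (0 : ℝ)..T, I2 T w₁ t * w₂ t := by
  have hparts := integral_mul_deriv_eq_deriv_mul (a := 0) (b := T)
    (fun t _ => I2_hasDerivAt T hw₁ t) (fun t _ => I1_hasDerivAt T hw₂ t)
    ((continuous_I1 T hw₁).neg.intervalIntegrable _ _) (hw₂.intervalIntegrable _ _)
  simp only [I2_self, I2_zero, zero_mul, sub_zero, neg_mul, integral_neg, zero_sub, neg_neg]
    at hparts
  exact hparts.symm

/-- ∫₀ᵀ I₁[w₁] I₁[w₂] dt = ∫₀ᵀ I₂[w₁] w₂ dt. -/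
theorem time_integral_operators_adjoint_identity (T : ℝ) (hT : 0 < T)
    (w₁ w₂ : ℝ → ℝ) (hw₁ : Continuous w₁) (hw₂ : Continuous w₂) :
    (∫ t in (0 : ℝ)..T, I1 T w₁ t * I1 T w₂ t)
      = ∫ t in (0 : ℝ)..T, I2 T w₁ t * w₂ t :=
  time_integral_operators_adjoint_identity_general T w₁ w₂ hw₁ hw₂
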